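/- Let (λ_1,...,λ_m) be the unique solution of the system Σ_{(b_k,...,b_1)∈Ξ_k} ∏_j λ_j^{b_j}/b_j! = 1 for k = 1,...,m. Then for every k ∈ {1,...,m}, the sum over all vectors (b_k,...,b_1) ∈ Ξ_k^+ of ∏_j λ_j^{b_j}/b_j! equals 1, where Ξ_k^+ = {(b_k,...,b_1) ∈ Ξ̂_k : b_k + ... + b_1 = k}. -/

import Mathlib

open Finset

/-- `sumFrom b k'` is `b_k + b_{k-1} + ⋯ + b_{k'}`, where the `Fin k`-index `j`
encodes the subscript `j+1` (so `b ⟨0,_⟩ = b₁`, …, `b ⟨k-1,_⟩ = b_k`). -/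
def sumFrom {k : ℕ} (b : Fin k → ℕ) (k' : ℕ) : ℕ :=
  ∑ ℓ : Fin k, if k' ≤ ℓ.val + 1 then b ℓ else 0

/-- The set `Ξ̂_k` of non-negative integer vectors `(b_k, …, b_1)` with
`b_k + ⋯ + b_{k'} + k' ≤ k + 1` for all `1 ≤ k' ≤ k` and total sum at least `1`. -/
def XiHat (k : ℕ) : Set (Fin k → ℕ) :=
  {b | (∀ k', 1 ≤ k' → k' ≤ k → sumFrom b k' + k' ≤ k + 1) ∧ 1 ≤ ∑ ℓ, b ℓ}

/-- `Ξ_k`: vectors of `Ξ̂_k` having no proper left truncated subvector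
`(b_{k'}, …, b_1)` in `Ξ̂_{k'}` for any `k' < k`. -/
def Xi (k : ℕ) : Set (Fin k → ℕ) :=
  {b | b ∈ XiHat k ∧
    ∀ k' (h : k' < k), (fun j : Fin k' => b (Fin.castLE h.le j)) ∉ XiHat k'}

/-- The equality system `∑_{(b_k,…,b_1) ∈ Ξ_k} ∏_j λ_j^{b_j}/b_j! = 1` for `k = 1, …, m`. -/
def eqSystem (m : ℕ) (lam : ℕ → ℝ) : Prop :=
  ∀ k, 1 ≤ k → k ≤ m →
    ∑ᶠ b ∈ Xi k, ∏ j : Fin k, lam (j.val + 1) ^ (b j) / (Nat.factorial (b j)) = 1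

/-- `Ξ_k⁺`: vectors of `Ξ̂_k` with total sum exactly `k`. -/
def XiPlus (k : ℕ) : Set (Fin k → ℕ) :=
  {b | b ∈ XiHat k ∧ ∑ j, b j = k}

/-!
Let `p ≥ 1` be the last index at which `b ∈ Ξ_k⁺` makes the constraint `b_k + ⋯ + b_p + p ≤ k + 1`
tight. Clearing the entries of `b` below `p` gives an element of `Ξ_k`: indeed `Ξ_k` consists
exactly of the vectors of `Ξ̂_k` that have a tight index and vanish below the last one. The fibre
over `x ∈ Ξ_k` consists of the fillings of positions `1, …, p - 1` of `x` by the elements of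
`Ξ_{p-1}⁺` (the empty vector when `p = 1`), and the weight `∏ λ_j^{b_j}/b_j!` is multiplicative
under filling. So the sum over `Ξ_k⁺` is `∑_{x ∈ Ξ_k} weight x · ∑_{Ξ_{p-1}⁺} weight`, which is `1`
by strong induction on `k` and the `k`-th equation of the system.
-/

@[to_additive]
theorem prod_castLE_eq_prod_filter {M : Type*} [CommMonoid M] {k n : ℕ} (h : n ≤ k)
    (f : Fin k → M) : ∏ i : Fin n, f (Fin.castLE h i) = ∏ j with j.val < n, f j := by
  refine (prod_map univ (Fin.castLEEmb h) f).symm.trans (congrArg (fun s => ∏ j ∈ s, f j) ?_)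
  ext j
  simp only [mem_map, mem_univ, true_and, Fin.castLEEmb_apply, mem_filter]
  exact ⟨fun ⟨i, hi⟩ => hi ▸ i.isLt, fun hj => ⟨⟨j.val, hj⟩, rfl⟩⟩

section sumFrom

variable {k : ℕ} (b : Fin k → ℕ)

lemma sumFrom_one : sumFrom b 1 = ∑ ℓ, b ℓ :=
  sum_congr rfl fun _ _ => if_pos (by omega)

lemma sumFrom_antitone : Antitone (sumFrom b) := fun _ _ h =>
  sum_le_sum fun _ _ => by split_ifs <;> omega

lemma sumFrom_le_sum (i : ℕ) : sumFrom b i ≤ ∑ ℓ, b ℓ :=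
  sum_le_sum fun _ _ => by split_ifs <;> omega

lemma sumFrom_eq_sum_iff (i : ℕ) :
    sumFrom b i = ∑ ℓ, b ℓ ↔ ∀ j : Fin k, j.val + 1 < i → b j = 0 := by
  have hsplit : ∑ ℓ, b ℓ = sumFrom b i + ∑ ℓ, if ℓ.val + 1 < i then b ℓ else 0 := by
    rw [sumFrom, ← sum_add_distrib]
    exact sum_congr rfl fun _ _ => by split_ifs <;> omega
  rw [hsplit, left_eq_add, sum_eq_zero_iff]
  simp

lemma sumFrom_congr {b' : Fin k → ℕ} {i i' : ℕ} (h : ∀ j : Fin k, i ≤ j.val + 1 → b j = b' j)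
    (hi : i ≤ i') : sumFrom b i' = sumFrom b' i' :=
  sum_congr rfl fun j _ => by
    split_ifs with hj
    exacts [h j (hi.trans hj), rfl]

end sumFrom

def truncate {k n : ℕ} (h : n ≤ k) (b : Fin k → ℕ) : Fin n → ℕ := fun i => b (Fin.castLE h i)

lemma sumFrom_truncate {k n : ℕ} (h : n ≤ k) (b : Fin k → ℕ) {i : ℕ} (hi : i ≤ n + 1) :
    sumFrom (truncate h b) i + sumFrom b (n + 1) = sumFrom b i := by
  have hlow : sumFrom (truncate h b) i = ∑ ℓ with ℓ.val < n, if i ≤ ℓ.val + 1 then b ℓ else 0 :=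
    sum_castLE_eq_sum_filter h (fun ℓ => if i ≤ ℓ.val + 1 then b ℓ else 0)
  have hhigh : sumFrom b (n + 1) = ∑ ℓ with ¬ℓ.val < n, if i ≤ ℓ.val + 1 then b ℓ else 0 := by
    rw [sum_filter, sumFrom]
    exact sum_congr rfl fun _ _ => by split_ifs <;> omega
  rw [hlow, hhigh, sum_filter_add_sum_filter_not, sumFrom]

lemma truncate_mem_XiHat_iff {k n : ℕ} (h : n ≤ k) (b : Fin k → ℕ) :
    truncate h b ∈ XiHat n ↔
      (∀ i, 1 ≤ i → i ≤ n → sumFrom b i + i ≤ sumFrom b (n + 1) + (n + 1)) ∧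
        sumFrom b (n + 1) < ∑ ℓ, b ℓ := by
  have key := fun i (hi : i ≤ n + 1) => sumFrom_truncate h b hi
  have h1 := key 1 (by omega)
  rw [sumFrom_one, sumFrom_one] at h1
  refine ⟨fun ⟨hA, hpos⟩ => ⟨fun i hi hin => ?_, by omega⟩,
    fun ⟨hA, hlt⟩ => ⟨fun i hi hin => ?_, by omega⟩⟩ <;>
  · have := hA i hi hin
    have := key i (by omega)
    omega

/-- The last index `i ≤ k` at which the constraint `sumFrom b i + i ≤ k + 1` of `Ξ̂_k` is tight,
and `0` if there is none. -/
def pivot {k : ℕ} (b : Fin k → ℕ) : ℕ :=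
  Nat.findGreatest (fun i => sumFrom b i + i = k + 1) k

section pivot

variable {k : ℕ} (b : Fin k → ℕ)

lemma pivot_le : pivot b ≤ k := Nat.findGreatest_le k

lemma sumFrom_pivot (h : pivot b ≠ 0) : sumFrom b (pivot b) + pivot b = k + 1 :=
  Nat.findGreatest_of_ne_zero (P := fun i => sumFrom b i + i = k + 1) rfl h

lemma le_pivot {i : ℕ} (hi : i ≤ k) (h : sumFrom b i + i = k + 1) : i ≤ pivot b :=
  Nat.le_findGreatest (P := fun i => sumFrom b i + i = k + 1) hi h

lemma sumFrom_add_ne_of_pivot_lt {i : ℕ} (h : pivot b < i) (hi : i ≤ k) :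
    sumFrom b i + i ≠ k + 1 :=
  Nat.findGreatest_is_greatest (P := fun i => sumFrom b i + i = k + 1) h hi

lemma pivot_ne_zero (hk : 1 ≤ k) (hb : ∑ ℓ, b ℓ = k) : pivot b ≠ 0 := by
  have := le_pivot b hk (by rw [sumFrom_one, hb])
  omega

variable {b}

lemma pivot_congr {b' : Fin k → ℕ} (h : ∀ i, pivot b ≤ i → sumFrom b' i = sumFrom b i) :
    pivot b' = pivot b := by
  rw [pivot, Nat.findGreatest_eq_iff]
  refine ⟨pivot_le b, fun hne => ?_, fun i hi hik => ?_⟩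
  · rw [h _ le_rfl]
    exact sumFrom_pivot b hne
  · rw [h i hi.le]
    exact sumFrom_add_ne_of_pivot_lt b hi hik

end pivot

lemma sum_le_of_mem_XiHat {k : ℕ} {b : Fin k → ℕ} (hb : b ∈ XiHat k) : ∑ ℓ, b ℓ ≤ k := by
  obtain ⟨hA, hpos⟩ := hb
  cases k with
  | zero => simp at hpos
  | succ k => simpa [sumFrom_one] using hA 1 le_rfl (by omega)

lemma mem_Xi_iff {k : ℕ} {x : Fin k → ℕ} :
    x ∈ Xi k ↔ x ∈ XiHat k ∧ pivot x ≠ 0 ∧ sumFrom x (pivot x) = ∑ ℓ, x ℓ := by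
  constructor
  · rintro ⟨⟨hA, hpos⟩, htr⟩
    have hk : 1 ≤ k := by
      have := sum_le_of_mem_XiHat ⟨hA, hpos⟩
      omega
    -- otherwise cutting `x` just below the maximiser `q` would give a truncation in `Ξ̂_{q-1}`
    have hmaxmass : ∀ q ∈ Icc 1 k,
        (∀ i ∈ Icc 1 k, sumFrom x i + i ≤ sumFrom x q + q) → sumFrom x q = ∑ ℓ, x ℓ := by
      intro q hq hmax
      simp only [mem_Icc] at hq hmax
      have hq' : q - 1 + 1 = q := by omega
      have hnot := htr (q - 1) (by omega)
      change truncate _ x ∉ XiHat _ at hnot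
      rw [truncate_mem_XiHat_iff, hq'] at hnot
      push Not at hnot
      have := hnot fun i hi hiq => hmax i ⟨hi, by omega⟩
      have := sumFrom_le_sum x q
      omega
    obtain ⟨q, hq, hqmax⟩ := exists_max_image (Icc 1 k) (fun i => sumFrom x i + i)
      ⟨1, mem_Icc.2 ⟨le_rfl, hk⟩⟩
    have hkmem : k ∈ Icc 1 k := mem_Icc.2 ⟨hk, le_rfl⟩
    have hq_tight : sumFrom x q + q = k + 1 := by
      have hsq := hmaxmass q hq hqmax
      have hkq := hqmax k hkmem
      have := hA q (mem_Icc.1 hq).1 (mem_Icc.1 hq).2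
      -- a maximum `≤ k` would make `k` a maximiser too, and then `sumFrom x k + k ≥ k + 1`
      by_contra hne
      have hsk := hmaxmass k hkmem fun i hi => (hqmax i hi).trans (by omega)
      omega
    have hqp := le_pivot x (mem_Icc.1 hq).2 hq_tight
    have hp0 : pivot x ≠ 0 := by
      have := (mem_Icc.1 hq).1
      omega
    refine ⟨⟨hA, hpos⟩, hp0, hmaxmass _ (mem_Icc.2 ⟨by omega, pivot_le x⟩) fun i hi => ?_⟩
    rw [sumFrom_pivot x hp0]
    exact hA i (mem_Icc.1 hi).1 (mem_Icc.1 hi).2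
  · rintro ⟨hx, hp0, hsp⟩
    refine ⟨hx, fun q hq hmem => ?_⟩
    change truncate _ x ∈ XiHat _ at hmem
    obtain ⟨hle, hlt⟩ := (truncate_mem_XiHat_iff _ x).1 hmem
    by_cases hqp : q + 1 ≤ pivot x
    · have := sumFrom_antitone x hqp
      omega
    · have h1 := hle (pivot x) (by omega) (by omega)
      have h2 : sumFrom x (q + 1) + (q + 1) ≤ k + 1 := hx.1 (q + 1) (by omega) (by omega)
      have h3 := sumFrom_pivot x hp0
      exact sumFrom_add_ne_of_pivot_lt x (i := q + 1) (by omega) hq (by omega)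

def clearBelow {k : ℕ} (b : Fin k → ℕ) : Fin k → ℕ :=
  fun j => if pivot b ≤ j.val + 1 then b j else 0

/-- `Ξ_n⁺` with the empty vector admitted for `n = 0`. -/
def XiPlus₀ (n : ℕ) : Set (Fin n → ℕ) :=
  {c | (∀ i, 1 ≤ i → i ≤ n → sumFrom c i + i ≤ n + 1) ∧ ∑ j, c j = n}

section clearBelow

variable {k : ℕ} (b : Fin k → ℕ)

lemma sumFrom_clearBelow {i : ℕ} (hi : pivot b ≤ i) : sumFrom (clearBelow b) i = sumFrom b i :=
  sumFrom_congr _ (fun _ hj => if_pos hj) hi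

lemma pivot_clearBelow : pivot (clearBelow b) = pivot b :=
  pivot_congr fun _ hi => sumFrom_clearBelow b hi

lemma sum_clearBelow : ∑ j, clearBelow b j = sumFrom b (pivot b) := by
  rw [← (sumFrom_eq_sum_iff (clearBelow b) (pivot b)).2 fun j hj => if_neg (by omega),
    sumFrom_clearBelow b le_rfl]

lemma clearBelow_mem_Xi (hk : 1 ≤ k) (hb : b ∈ XiPlus₀ k) : clearBelow b ∈ Xi k := by
  obtain ⟨hA, hsum⟩ := hb
  have hp0 := pivot_ne_zero b hk hsum
  have htight := sumFrom_pivot b hp0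
  have htot := sum_clearBelow b
  have hpk := pivot_le b
  rw [mem_Xi_iff, pivot_clearBelow, sumFrom_clearBelow b le_rfl, htot]
  refine ⟨⟨fun i hi hik => ?_, by omega⟩, hp0, rfl⟩
  rcases le_total (pivot b) i with hpi | hip
  · rw [sumFrom_clearBelow b hpi]
    exact hA i hi hik
  · have := sumFrom_le_sum (clearBelow b) i
    omega

lemma clearBelow_eq_self {x : Fin k → ℕ} (hx : x ∈ Xi k) : clearBelow x = x := by
  obtain ⟨-, -, hsp⟩ := mem_Xi_iff.1 hx
  funext j
  unfold clearBelow
  split_ifs with hj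
  · rfl
  · exact ((sumFrom_eq_sum_iff x _).1 hsp j (by omega)).symm

lemma truncate_mem_XiPlus₀ {n : ℕ} (h : n ≤ k) (hb : b ∈ XiPlus₀ k) (hn : n + 1 = pivot b) :
    truncate h b ∈ XiPlus₀ n := by
  obtain ⟨hA, hsum⟩ := hb
  have htight := sumFrom_pivot b (by omega)
  rw [← hn] at htight
  have key := fun i (hi : i ≤ n + 1) => sumFrom_truncate h b hi
  refine ⟨fun i hi hin => ?_, ?_⟩
  · have := key i (by omega)
    have := hA i hi (by omega)
    omega
  · have := key 1 (by omega)
    rw [sumFrom_one, sumFrom_one] at this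
    omega

end clearBelow

def glue {k n : ℕ} (x : Fin k → ℕ) (c : Fin n → ℕ) : Fin k → ℕ :=
  fun j => if h : j.val < n then c ⟨j.val, h⟩ else x j

section glue

variable {k n : ℕ} (x : Fin k → ℕ) (c : Fin n → ℕ)

lemma glue_of_le {j : Fin k} (hj : n ≤ j.val) : glue x c j = x j := dif_neg (by omega)

lemma truncate_glue (h : n ≤ k) : truncate h (glue x c) = c :=
  funext fun i => dif_pos i.isLt

lemma glue_truncate {b : Fin k → ℕ} (h : n ≤ k) (hxb : ∀ j : Fin k, n ≤ j.val → x j = b j) :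
    glue x (truncate h b) = b := by
  funext j
  unfold glue truncate
  split_ifs with hj
  · rfl
  · exact hxb j (by omega)

lemma sumFrom_glue_of_le {i : ℕ} (hi : n + 1 ≤ i) : sumFrom (glue x c) i = sumFrom x i :=
  sumFrom_congr _ (fun _ hj => glue_of_le x c (by omega)) hi

variable {x}

lemma glue_mem_XiPlus₀ (hx : x ∈ Xi k) (hn : n + 1 = pivot x) (hc : c ∈ XiPlus₀ n) :
    glue x c ∈ XiPlus₀ k := by
  obtain ⟨⟨hA, -⟩, hp0, hsp⟩ := mem_Xi_iff.1 hx
  have htight := sumFrom_pivot x hp0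
  obtain ⟨hcA, hcs⟩ := hc
  have hnk : n ≤ k := by
    have := pivot_le x
    omega
  have hlow : ∀ i, i ≤ n + 1 → sumFrom (glue x c) i = sumFrom c i + ∑ ℓ, x ℓ := by
    intro i hi
    have := sumFrom_truncate hnk (glue x c) hi
    rw [truncate_glue, sumFrom_glue_of_le x c le_rfl, hn, hsp] at this
    omega
  refine ⟨fun i hi hik => ?_, ?_⟩
  · by_cases hin : i ≤ n
    · have := hcA i hi hin
      rw [hlow i (by omega)]
      omega
    · rw [sumFrom_glue_of_le x c (by omega)]
      exact hA i hi hik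
  · rw [← sumFrom_one, hlow 1 (by omega), sumFrom_one]
    omega

lemma clearBelow_glue (hx : x ∈ Xi k) (hn : n + 1 = pivot x) : clearBelow (glue x c) = x := by
  have hpiv : pivot (glue x c) = pivot x :=
    pivot_congr fun _ hi => sumFrom_glue_of_le x c (by omega)
  conv_rhs => rw [← clearBelow_eq_self hx]
  funext j
  simp only [clearBelow, hpiv]
  split_ifs with hj
  · exact glue_of_le x c (by omega)
  · rfl

end glue

noncomputable def weight {k : ℕ} (lam : ℕ → ℝ) (b : Fin k → ℕ) : ℝ :=
  ∏ j : Fin k, lam (j.val + 1) ^ (b j) / (Nat.factorial (b j))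

lemma weight_glue {k n : ℕ} (lam : ℕ → ℝ) (h : n ≤ k) {x : Fin k → ℕ} (c : Fin n → ℕ)
    (hx : ∀ j : Fin k, j.val < n → x j = 0) :
    weight lam (glue x c) = weight lam x * weight lam c := by
  have hsplit := fun b : Fin k → ℕ => (prod_filter_mul_prod_filter_not univ
    (fun j : Fin k => j.val < n) (fun j => lam (j.val + 1) ^ b j / (b j).factorial)).symm
  have hlow : ∏ j with j.val < n, lam (j.val + 1) ^ glue x c j / (glue x c j).factorial =
      weight lam c := by
    rw [← prod_castLE_eq_prod_filter h]
    exact congrArg (weight lam) (truncate_glue x c h)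
  have hhigh : ∏ j with ¬j.val < n, lam (j.val + 1) ^ glue x c j / (glue x c j).factorial =
      ∏ j with ¬j.val < n, lam (j.val + 1) ^ x j / (x j).factorial :=
    prod_congr rfl fun j hj => by rw [glue_of_le x c (by simpa using hj)]
  have hzero : ∏ j with j.val < n, lam (j.val + 1) ^ x j / (x j).factorial = 1 :=
    prod_eq_one fun j hj => by simp [hx j (by simpa using hj)]
  rw [weight, weight, hsplit, hsplit, hlow, hhigh, hzero]
  ring

lemma finite_of_sum_le {k : ℕ} {s : Set (Fin k → ℕ)} (h : ∀ b ∈ s, ∑ j, b j ≤ k) : s.Finite :=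
  (Set.Finite.pi fun _ => Set.finite_Iic k).subset fun b hb j _ =>
    (single_le_sum (fun _ _ => Nat.zero_le _) (mem_univ j)).trans (h b hb)

lemma Xi_finite (k : ℕ) : (Xi k).Finite :=
  finite_of_sum_le fun _ hb => sum_le_of_mem_XiHat hb.1

lemma XiPlus₀_finite (k : ℕ) : (XiPlus₀ k).Finite :=
  finite_of_sum_le fun _ hb => hb.2.le

lemma XiPlus₀_eq_XiPlus {k : ℕ} (hk : 1 ≤ k) : XiPlus₀ k = XiPlus k :=
  Set.ext fun _ => ⟨fun ⟨hA, hs⟩ => ⟨⟨hA, by omega⟩, hs⟩, fun ⟨⟨hA, _⟩, hs⟩ => ⟨hA, hs⟩⟩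

lemma sum_XiPlus₀_zero (lam : ℕ → ℝ) : ∑ᶠ c ∈ XiPlus₀ 0, weight lam c = 1 := by
  have huniv : XiPlus₀ 0 = Set.univ := Set.eq_univ_of_forall fun _ => ⟨by omega, by simp⟩
  simp [huniv, weight, finsum_unique]

lemma sum_fiber_clearBelow {k n : ℕ} (lam : ℕ → ℝ) {x : Fin k → ℕ} (hx : x ∈ Xi k)
    (hn : n + 1 = pivot x) :
    ∑ b ∈ (XiPlus₀_finite k).toFinset with clearBelow b = x, weight lam b =
      weight lam x * ∑ c ∈ (XiPlus₀_finite n).toFinset, weight lam c := by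
  have hnk : n ≤ k := by
    have := pivot_le x
    omega
  have hglue : ∀ b, clearBelow b = x → glue x (truncate hnk b) = b := by
    rintro b rfl
    refine glue_truncate _ hnk fun j hj => if_pos ?_
    rw [← pivot_clearBelow b]
    omega
  rw [mul_sum]
  refine sum_nbij' (truncate hnk) (glue x) (fun b hb => ?_) (fun c hc => ?_)
    (fun b hb => hglue b (mem_filter.1 hb).2) (fun c _ => truncate_glue x c hnk) (fun b hb => ?_)
  · obtain ⟨hbk, rfl⟩ := mem_filter.1 hb
    rw [Set.Finite.mem_toFinset] at hbk ⊢
    exact truncate_mem_XiPlus₀ b hnk hbk (hn.trans (pivot_clearBelow b))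
  · rw [Set.Finite.mem_toFinset] at hc
    rw [mem_filter, Set.Finite.mem_toFinset]
    exact ⟨glue_mem_XiPlus₀ c hx hn hc, clearBelow_glue c hx hn⟩
  · conv_lhs => rw [← hglue b (mem_filter.1 hb).2]
    refine weight_glue lam hnk _ fun j hj => ?_
    rw [← clearBelow_eq_self hx]
    exact if_neg (by omega)

lemma sum_XiPlus₀_eq_sum_Xi {k : ℕ} (lam : ℕ → ℝ) (hk : 1 ≤ k) :
    ∑ᶠ b ∈ XiPlus₀ k, weight lam b =
      ∑ᶠ x ∈ Xi k, weight lam x * ∑ᶠ c ∈ XiPlus₀ (pivot x - 1), weight lam c := by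
  classical
  rw [finsum_mem_eq_finite_toFinset_sum _ (XiPlus₀_finite k),
    finsum_mem_eq_finite_toFinset_sum _ (Xi_finite k),
    ← sum_fiberwise_of_maps_to (g := clearBelow) (t := (Xi_finite k).toFinset) fun b hb => by
      simpa using clearBelow_mem_Xi b hk (by simpa using hb)]
  refine sum_congr rfl fun x hx => ?_
  rw [Set.Finite.mem_toFinset] at hx
  rw [finsum_mem_eq_finite_toFinset_sum _ (XiPlus₀_finite _)]
  exact sum_fiber_clearBelow lam hx (by have := (mem_Xi_iff.1 hx).2.1; omega)

lemma sum_XiPlus₀_eq_one {m : ℕ} {lam : ℕ → ℝ} (h : eqSystem m lam) (n : ℕ) (hn : n ≤ m) :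
    ∑ᶠ c ∈ XiPlus₀ n, weight lam c = 1 := by
  induction n using Nat.strong_induction_on with
  | _ k ih =>
  rcases Nat.eq_zero_or_pos k with rfl | hk
  · exact sum_XiPlus₀_zero lam
  · rw [sum_XiPlus₀_eq_sum_Xi lam hk]
    refine (finsum_mem_congr rfl fun x hx => ?_).trans (h k hk hn)
    have := (mem_Xi_iff.1 hx).2.1
    have := pivot_le x
    rw [ih _ (by omega) (by omega), mul_one]
    rfl

/-- If `(λ_1,…,λ_m)` solves the equation system, then for every `k ∈ {1,…,m}`
the sum over `Ξ_k⁺` of `∏_j λ_j^{b_j}/b_j!` equals `1`. -/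
theorem sum_XiPlus_eq_one (m : ℕ) (lam : ℕ → ℝ) (h : eqSystem m lam) :
    ∀ k, 1 ≤ k → k ≤ m →
      ∑ᶠ b ∈ XiPlus k,
        ∏ j : Fin k, lam (j.val + 1) ^ (b j) / (Nat.factorial (b j)) = 1 := by
  intro k hk hkm
  rw [← XiPlus₀_eq_XiPlus hk]
  exact sum_XiPlus₀_eq_one h k hkm
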